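/- arXiv:2406.19935 — 2 statements merged into one kernel-verified Lean document; each statement's English description precedes it below -/
import Mathlib

section
/- Let A = R(x;σ,δ) be the skew Ore polynomial ring and M a completely (σ,δ)-compatible right R-module. If P is a prime ideal of R such that P = ann_R(M/N) for some submodule N of M, then PA = ann_A(M[x⁻¹]/N[x⁻¹]), where N[x⁻¹] is the A-submodule of M[x⁻¹] of elements all of whose coefficients lie in N. -/
/-!
STATEMENT 9. Let `A = R(x;σ,δ)` be the skew Ore polynomial ring and `M` a completely
`(σ,δ)`-compatible right `R`-module.  If `P` is a prime ideal of `R` such that `P = ann_R(M/N)`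
for some submodule `N` of `M`, then `PA = ann_A(M[x⁻¹]/N[x⁻¹])`, where `N[x⁻¹]` is the
`A`-submodule of `M[x⁻¹]` of elements all of whose coefficients lie in `N`.

Encoding: right modules over a ring `T` are modules over `Tᵐᵒᵖ` (`m·t := op t • m`).  The skew
Ore polynomial ring is axiomatized by `hbasis` (free left `R`-module with basis `{xᵏ}`) and
`hcomm` (`x·r = σ(r)·x + x·δ(r)·x`).  The inverse polynomial module `M[x⁻¹]` is `ℕ →₀ M`
(coefficient of `x⁻ᵏ` at `k`), a right `A`-module whose action on monomials `m x⁻ᵏ = single k m`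
is given by `hactr` (via the maps `f_k^i = fWord σ' δ' k i` with `σ' = σ⁻¹`, `δ' = -δ∘σ⁻¹`) and
`hactx`.  `PA` is the set of finite sums of products `p·a` with `p ∈ P`, `a ∈ A`, and
`ann_A(M[x⁻¹]/N[x⁻¹]) = {a : A | ∀ f, all coefficients of f·a lie in N}`.
-/

open MulOpposite

/-- `fWord σ' δ' k i` is the sum of all `k`-letter words in the maps `σ'` and `δ'` containing
exactly `i` letters `σ'` and `k - i` letters `δ'` (and `0` when `i > k`). -/
def fWord {R : Type*} [Ring R] (σ' δ' : R → R) : ℕ → ℕ → R → R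
  | 0, 0, r => r
  | 0, _ + 1, _ => 0
  | k + 1, 0, r => fWord σ' δ' k 0 (δ' r)
  | k + 1, i + 1, r => fWord σ' δ' k i (σ' r) + fWord σ' δ' k (i + 1) (δ' r)

/-- A prime ideal of a (possibly noncommutative) ring `T`, as a set: a proper two-sided ideal
`P` such that `aTb ⊆ P` implies `a ∈ P` or `b ∈ P`. -/
def IsPrimeIdealSet (T : Type*) [Ring T] (P : Set T) : Prop :=
  (0 : T) ∈ P ∧ (∀ a ∈ P, ∀ b ∈ P, a + b ∈ P) ∧
    (∀ a ∈ P, ∀ t : T, t * a ∈ P ∧ a * t ∈ P) ∧ P ≠ Set.univ ∧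
    ∀ a b : T, (∀ t : T, a * t * b ∈ P) → a ∈ P ∨ b ∈ P

/-- `M` is completely `(σ,δ)`-compatible (right modules encoded over `Rᵐᵒᵖ`). -/
def CompletelySigmaDeltaCompatible (R : Type*) [Ring R] (σ δ : R → R)
    (M : Type*) [AddCommGroup M] [Module Rᵐᵒᵖ M] : Prop :=
  ∀ (N : Submodule Rᵐᵒᵖ M) (m : M ⧸ N) (r : R),
    (op r • m = 0 ↔ op (σ r) • m = 0) ∧ (op r • m = 0 → op (δ r) • m = 0)

theorem span_prime_annihilator_inverse_polynomial
    {R : Type*} [Ring R] (σ : R ≃+* R) (δ : R → R)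
    (hδadd : ∀ r s : R, δ (r + s) = δ r + δ s)
    (hδmul : ∀ r s : R, δ (r * s) = σ r * δ s + δ r * s)
    (hδln : ∀ r : R, ∃ n : ℕ, 0 < n ∧ δ^[n] r = 0)
    {A : Type*} [Ring A] (ι : R →+* A) (x : A)
    (hbasis : Function.Bijective fun c : ℕ →₀ R => c.sum fun k r => ι r * x ^ k)
    (hcomm : ∀ r : R, x * ι r = ι (σ r) * x + x * ι (δ r) * x)
    {M : Type*} [AddCommGroup M] [Module Rᵐᵒᵖ M]
    [Module Aᵐᵒᵖ (ℕ →₀ M)]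
    (hactr : ∀ (m : M) (k : ℕ) (r : R),
      op (ι r) • Finsupp.single k m =
        ∑ i ∈ Finset.range (k + 1),
          Finsupp.single i (op (fWord (⇑σ.symm) (fun s => -δ (σ.symm s)) k i r) • m))
    (hactx : ∀ (m : M) (k j : ℕ),
      op (x ^ j) • Finsupp.single k m =
        if j ≤ k then Finsupp.single (k - j) m else (0 : ℕ →₀ M))
    (hcompat : CompletelySigmaDeltaCompatible R (⇑σ) δ M)
    (P : Set R) (hP : IsPrimeIdealSet R P)
    (N : Submodule Rᵐᵒᵖ M)
    (hPN : P = {r : R | ∀ m : M, op r • m ∈ N}) :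
    {a : A | ∃ (n : ℕ) (p : Fin n → R) (c : Fin n → A),
        (∀ i, p i ∈ P) ∧ a = ∑ i, ι (p i) * c i} =
      {a : A | ∀ (f : ℕ →₀ M) (k : ℕ), (op a • f) k ∈ N} := by
  classical
  set σ' : R → R := ⇑σ.symm with hσ'def
  set δ' : R → R := fun s => -δ (σ.symm s) with hδ'def
  -- basic facts about P
  have hδ0 : δ 0 = 0 := by
    have h := hδadd 0 0
    simpa using h.symm
  have hPq : ∀ r : R, r ∈ P ↔ ∀ m : M ⧸ N, op r • m = 0 := by
    intro r
    rw [hPN]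
    constructor
    · intro h m
      obtain ⟨m, rfl⟩ := Submodule.Quotient.mk_surjective N m
      rw [← Submodule.Quotient.mk_smul, Submodule.Quotient.mk_eq_zero]
      exact h m
    · intro h m
      have h2 := h (Submodule.Quotient.mk m)
      rwa [← Submodule.Quotient.mk_smul, Submodule.Quotient.mk_eq_zero] at h2
  have hPσ : ∀ r : R, r ∈ P ↔ σ r ∈ P := by
    intro r
    rw [hPq, hPq]
    exact forall_congr' fun m => (hcompat N m r).1
  have hPδ : ∀ r : R, r ∈ P → δ r ∈ P := by
    intro r hr
    rw [hPq] at hr ⊢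
    exact fun m => (hcompat N m r).2 (hr m)
  have hPσ' : ∀ r : R, r ∈ P → σ' r ∈ P := by
    intro r hr
    rw [hPσ (σ' r)]
    simpa [hσ'def] using hr
  have hP0 : (0 : R) ∈ P := by
    rw [hPN]
    intro m
    simp
  have hPneg : ∀ r : R, r ∈ P → -r ∈ P := by
    intro r hr
    rw [hPN] at hr ⊢
    intro m
    have := N.neg_mem (hr m)
    simpa using this
  have hPadd : ∀ a b : R, a ∈ P → b ∈ P → a + b ∈ P := by
    intro a b ha hb
    rw [hPN] at ha hb ⊢
    intro m
    have := N.add_mem (ha m) (hb m)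
    simpa [add_smul] using this
  have hPδ' : ∀ r : R, r ∈ P → δ' r ∈ P := by
    intro r hr
    exact hPneg _ (hPδ _ (hPσ' _ hr))
  have hσ'0 : σ' (0 : R) = 0 := by simp [hσ'def]
  have hδ'0 : δ' (0 : R) = 0 := by simp [hδ'def, hδ0]
  -- fWord lemmas
  have hfW0 : ∀ k i : ℕ, fWord σ' δ' k i (0 : R) = 0 := by
    intro k
    induction k with
    | zero =>
      intro i
      cases i with
      | zero => rfl
      | succ i => rfl
    | succ k ih =>
      intro i
      cases i with
      | zero =>
        show fWord σ' δ' k 0 (δ' 0) = 0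
        rw [hδ'0]; exact ih 0
      | succ i =>
        show fWord σ' δ' k i (σ' 0) + fWord σ' δ' k (i + 1) (δ' 0) = 0
        rw [hσ'0, hδ'0, ih, ih, add_zero]
  have hfWP : ∀ (k i : ℕ) (r : R), r ∈ P → fWord σ' δ' k i r ∈ P := by
    intro k
    induction k with
    | zero =>
      intro i r hr
      cases i with
      | zero => exact hr
      | succ i => exact hP0
    | succ k ih =>
      intro i r hr
      cases i with
      | zero => exact ih 0 _ (hPδ' r hr)
      | succ i =>
        exact hPadd _ _ (ih i _ (hPσ' r hr)) (ih (i + 1) _ (hPδ' r hr))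
  have hfWhi : ∀ (k i : ℕ) (r : R), k < i → fWord σ' δ' k i r = 0 := by
    intro k
    induction k with
    | zero =>
      intro i r hi
      cases i with
      | zero => omega
      | succ i => rfl
    | succ k ih =>
      intro i r hi
      cases i with
      | zero => omega
      | succ i =>
        show fWord σ' δ' k i (σ' r) + fWord σ' δ' k (i + 1) (δ' r) = 0
        rw [ih i _ (by omega), ih (i + 1) _ (by omega), add_zero]
  have hfWtop : ∀ (k : ℕ) (r : R), fWord σ' δ' k k r = σ.symm^[k] r := by
    intro k
    induction k with
    | zero => intro r; rfl
    | succ k ih =>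
      intro r
      show fWord σ' δ' k k (σ' r) + fWord σ' δ' k (k + 1) (δ' r) = σ.symm^[k + 1] r
      rw [hfWhi k (k + 1) _ (by omega), add_zero, ih, Function.iterate_succ_apply]
  have hPiter : ∀ (k : ℕ) (r : R), σ.symm^[k] r ∈ P → r ∈ P := by
    intro k
    induction k with
    | zero => intro r hr; exact hr
    | succ k ih =>
      intro r hr
      rw [Function.iterate_succ_apply] at hr
      have h2 := ih _ hr
      have h3 := (hPσ (σ.symm r)).mp h2
      simpa using h3
  -- coefficient lemmas
  have hcoeff_r : ∀ (r : R) (m : M) (t k : ℕ),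
      (op (ι r) • Finsupp.single t m) k =
        if k ≤ t then op (fWord σ' δ' t k r) • m else 0 := by
    intro r m t k
    rw [hactr, Finsupp.finset_sum_apply]
    simp only [Finsupp.single_apply]
    rw [Finset.sum_ite_eq' (Finset.range (t + 1)) k
      (fun i => op (fWord σ' δ' t i r) • m)]
    simp [Nat.lt_succ_iff]
  have hcoeff_x : ∀ (m : M) (t j k : ℕ),
      (op (x ^ j) • Finsupp.single t m) k = if j ≤ t ∧ k = t - j then m else 0 := by
    intro m t j k
    rw [hactx]
    by_cases h : j ≤ t
    · simp [h, Finsupp.single_apply, eq_comm]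
    · simp [h]
  have hsmul_decomp : ∀ (b : A) (f : ℕ →₀ M),
      op b • f = ∑ t ∈ f.support, op b • Finsupp.single t (f t) := by
    intro b f
    conv_lhs => rw [← Finsupp.sum_single f]
    rw [Finsupp.sum, Finset.smul_sum]
  -- N-closure lemmas
  have hN_r : ∀ (r : R) (f : ℕ →₀ M), (∀ k, f k ∈ N) → ∀ k, (op (ι r) • f) k ∈ N := by
    intro r f hf k
    rw [hsmul_decomp, Finsupp.finset_sum_apply]
    refine Submodule.sum_mem N fun t _ => ?_
    rw [hcoeff_r]
    split_ifs
    · exact N.smul_mem _ (hf t)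
    · exact N.zero_mem
  have hN_P : ∀ p ∈ P, ∀ (f : ℕ →₀ M) (k : ℕ), (op (ι p) • f) k ∈ N := by
    intro p hp f k
    rw [hsmul_decomp, Finsupp.finset_sum_apply]
    refine Submodule.sum_mem N fun t _ => ?_
    rw [hcoeff_r]
    split_ifs
    · have hmem := hfWP t k p hp
      rw [hPN] at hmem
      exact hmem (f t)
    · exact N.zero_mem
  have hN_x : ∀ (j : ℕ) (f : ℕ →₀ M), (∀ k, f k ∈ N) → ∀ k, (op (x ^ j) • f) k ∈ N := by
    intro j f hf k
    rw [hsmul_decomp, Finsupp.finset_sum_apply]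
    refine Submodule.sum_mem N fun t _ => ?_
    rw [hcoeff_x]
    split_ifs
    · exact hf t
    · exact N.zero_mem
  have hN_b : ∀ (b : A) (f : ℕ →₀ M), (∀ k, f k ∈ N) → ∀ k, (op b • f) k ∈ N := by
    intro b f hf k
    obtain ⟨c, rfl⟩ := hbasis.2 b
    have hb : op ((fun c : ℕ →₀ R => c.sum fun k r => ι r * x ^ k) c) • f =
        ∑ j ∈ c.support, op (x ^ j) • (op (ι (c j)) • f) := by
      show op (c.sum fun k r => ι r * x ^ k) • f = _
      rw [Finsupp.sum, Finset.op_sum, Finset.sum_smul]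
      refine Finset.sum_congr rfl fun j _ => ?_
      rw [op_mul, mul_smul]
    rw [hb, Finsupp.finset_sum_apply]
    exact Submodule.sum_mem N fun j _ => hN_x j _ (hN_r (c j) f hf) k
  -- key computation for the reverse inclusion
  have hcoeff0_x : ∀ (j : ℕ) (g : ℕ →₀ M), (op (x ^ j) • g) 0 = g j := by
    intro j g
    rw [hsmul_decomp, Finsupp.finset_sum_apply]
    have hterm : ∀ u ∈ g.support, (op (x ^ j) • Finsupp.single u (g u)) 0 =
        if u = j then g u else 0 := by
      intro u _
      rw [hcoeff_x]
      exact if_congr (by omega) rfl rfl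
    rw [Finset.sum_congr rfl hterm, Finset.sum_ite_eq' g.support j (fun u => g u)]
    split_ifs with h
    · rfl
    · exact (Finsupp.notMem_support_iff.mp h).symm
  have hkey : ∀ (c : ℕ →₀ R) (t : ℕ) (m : M),
      (op (c.sum fun k r => ι r * x ^ k) • Finsupp.single t m) 0 =
        ∑ j ∈ Finset.range (t + 1), op (fWord σ' δ' t j (c j)) • m := by
    intro c t m
    have hb : op (c.sum fun k r => ι r * x ^ k) • Finsupp.single t m =
        ∑ j ∈ c.support, op (x ^ j) • (op (ι (c j)) • Finsupp.single t m) := by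
      rw [Finsupp.sum, Finset.op_sum, Finset.sum_smul]
      refine Finset.sum_congr rfl fun j _ => ?_
      rw [op_mul, mul_smul]
    rw [hb, Finsupp.finset_sum_apply]
    have h1 : ∀ j ∈ c.support, (op (x ^ j) • (op (ι (c j)) • Finsupp.single t m)) 0 =
        if j ≤ t then op (fWord σ' δ' t j (c j)) • m else 0 := by
      intro j _
      rw [hcoeff0_x, hcoeff_r]
    rw [Finset.sum_congr rfl h1, ← Finset.sum_filter]
    refine Finset.sum_subset ?_ ?_
    · intro j hj
      rw [Finset.mem_filter] at hj
      rw [Finset.mem_range]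
      omega
    · intro j hj hj2
      rw [Finset.mem_range] at hj
      rw [Finset.mem_filter] at hj2
      have hjs : j ∉ c.support := by
        intro hc
        exact hj2 ⟨hc, by omega⟩
      rw [Finsupp.notMem_support_iff.mp hjs, hfW0]
      simp
  -- the main result
  ext a
  simp only [Set.mem_setOf_eq]
  constructor
  · rintro ⟨n, p, cf, hp, rfl⟩ f k
    have hb : op (∑ i, ι (p i) * cf i) • f =
        ∑ i, op (cf i) • (op (ι (p i)) • f) := by
      rw [Finset.op_sum, Finset.sum_smul]
      refine Finset.sum_congr rfl fun i _ => ?_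
      rw [op_mul, mul_smul]
    rw [hb, Finsupp.finset_sum_apply]
    exact Submodule.sum_mem N fun i _ =>
      hN_b (cf i) _ (fun k' => hN_P (p i) (hp i) f k') k
  · intro ha
    obtain ⟨c, rfl⟩ := hbasis.2 a
    simp only at ha ⊢
    have hcP : ∀ t : ℕ, c t ∈ P := by
      intro t
      induction t using Nat.strong_induction_on with
      | _ t ih =>
        have h1 : ∀ m : M, op (σ.symm^[t] (c t)) • m ∈ N := by
          intro m
          have h2 := ha (Finsupp.single t m) 0
          rw [hkey c t m, Finset.sum_range_succ] at h2
          have h3 : ∑ j ∈ Finset.range t, op (fWord σ' δ' t j (c j)) • m ∈ N :=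
            Submodule.sum_mem N fun j hj => by
              have hmem : fWord σ' δ' t j (c j) ∈ P :=
                hfWP t j _ (ih j (Finset.mem_range.mp hj))
              rw [hPN] at hmem
              exact hmem m
          have h4 : op (fWord σ' δ' t t (c t)) • m ∈ N := by
            have h5 := N.sub_mem h2 h3
            simpa using h5
          rwa [hfWtop] at h4
        have h5 : σ.symm^[t] (c t) ∈ P := by rw [hPN]; exact h1
        exact hPiter t _ h5
    refine ⟨c.support.card, fun i => c (c.support.equivFin.symm i),
      fun i => x ^ ((c.support.equivFin.symm i : ℕ)), fun i => hcP _, ?_⟩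
    show ∑ s ∈ c.support, ι (c s) * x ^ s = _
    rw [← Finset.sum_coe_sort c.support (fun s => ι (c s) * x ^ s)]
    exact (Equiv.sum_comp c.support.equivFin.symm
      (fun s : c.support => ι (c (s : ℕ)) * x ^ (s : ℕ))).symm
end

section
/- Let A = R(x;σ,δ) be the skew Ore polynomial ring. If M is a completely (σ,δ)-compatible right R-module, then Att(M[x⁻¹]_A) ⊇ { PA : P ∈ Att(M_R) }, i.e., for every attached prime P of the right R-module M, the ideal PA is an attached prime of the right A-module M[x⁻¹]. -/
/-!
STATEMENT 10. Let `A = R(x;σ,δ)` be the skew Ore polynomial ring.  If `M` is a completely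
`(σ,δ)`-compatible right `R`-module, then `Att(M[x⁻¹]_A) ⊇ { PA : P ∈ Att(M_R) }`, i.e. for every
attached prime `P` of the right `R`-module `M`, the ideal `PA` is an attached prime of the right
`A`-module `M[x⁻¹]`.

Encoding: right modules over a ring `T` are modules over `Tᵐᵒᵖ` (`m·t := op t • m`).  The skew
Ore polynomial ring is axiomatized by `hbasis` (free left `R`-module with basis `{xᵏ}`) and
`hcomm` (`x·r = σ(r)·x + x·δ(r)·x`).  The inverse polynomial module `M[x⁻¹]` is `ℕ →₀ M`
(coefficient of `x⁻ᵏ` at `k`), a right `A`-module whose action on monomials `m x⁻ᵏ = single k m`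
is given by `hactr` (via the maps `f_k^i = fWord σ' δ' k i` with `σ' = σ⁻¹`, `δ' = -δ∘σ⁻¹`)
and `hactx`.
-/

open MulOpposite

/-- The annihilator of the quotient of the right `T`-module `L` by the subset `Nset`, that is
`{t : T | L·t ⊆ Nset}`. -/
def annIn (T : Type*) [Ring T] (L : Type*) [AddCommGroup L] [Module Tᵐᵒᵖ L]
    (Nset : Set L) : Set T :=
  {t : T | ∀ l : L, op t • l ∈ Nset}

/-- The quotient `L/N` is a coprime right `T`-module: it is nonzero and
`ann_T(L/N) = ann_T((L/N)/(N'/N))` for every proper submodule `N'/N` of `L/N`; equivalently,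
`ann_T(L/N) = ann_T(L/N')` for every submodule `N ≤ N' < L`. -/
def CoprimeQuot (T : Type*) [Ring T] (L : Type*) [AddCommGroup L] [Module Tᵐᵒᵖ L]
    (N : Submodule Tᵐᵒᵖ L) : Prop :=
  (∃ l : L, l ∉ N) ∧
    ∀ N' : Submodule Tᵐᵒᵖ L, N ≤ N' → N' ≠ ⊤ →
      annIn T L (N : Set L) = annIn T L (N' : Set L)

/-- The set of attached prime ideals of the right `T`-module `L`: prime ideals of the form
`ann_T(L/N)` with `L/N` a coprime quotient of `L`. -/
def AttSet (T : Type*) [Ring T] (L : Type*) [AddCommGroup L] [Module Tᵐᵒᵖ L] : Set (Set T) :=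
  {P | IsPrimeIdealSet T P ∧
    ∃ N : Submodule Tᵐᵒᵖ L, CoprimeQuot T L N ∧ P = annIn T L (N : Set L)}

/-- For an ideal `P` of `R`, `paSet ι P` is the ideal `PA` of `A`: all finite sums of products
`p·a` with `p ∈ P` and `a ∈ A`. -/
def paSet {R A : Type*} [Ring R] [Ring A] (ι : R →+* A) (P : Set R) : Set A :=
  {a : A | ∃ (n : ℕ) (p : Fin n → R) (c : Fin n → A),
      (∀ i, p i ∈ P) ∧ a = ∑ i, ι (p i) * c i}

section Aux

variable {R : Type*} [Ring R]

lemma fWord_of_lt (σ' δ' : R → R) : ∀ (k i : ℕ), k < i → ∀ r, fWord σ' δ' k i r = 0 := by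
  intro k
  induction k with
  | zero =>
    intro i hi r
    match i, hi with
    | i + 1, _ => rfl
  | succ k ih =>
    intro i hi r
    match i, hi with
    | i + 1, hi =>
      show fWord σ' δ' k i (σ' r) + fWord σ' δ' k (i + 1) (δ' r) = 0
      rw [ih i (by omega) _, ih (i + 1) (by omega) _, add_zero]

lemma fWord_diag (σ' δ' : R → R) : ∀ (k : ℕ) (r : R), fWord σ' δ' k k r = σ'^[k] r := by
  intro k
  induction k with
  | zero => intro r; rfl
  | succ k ih =>
    intro r
    show fWord σ' δ' k k (σ' r) + fWord σ' δ' k (k + 1) (δ' r) = _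
    rw [ih, fWord_of_lt σ' δ' k (k + 1) (Nat.lt_succ_self k), add_zero,
      Function.iterate_succ_apply]

lemma fWord_mem (σ' δ' : R → R) (P : Set R) (h0 : (0 : R) ∈ P)
    (hadd : ∀ a ∈ P, ∀ b ∈ P, a + b ∈ P) (hσ : ∀ r ∈ P, σ' r ∈ P)
    (hδ : ∀ r ∈ P, δ' r ∈ P) :
    ∀ (k i : ℕ) (r : R), r ∈ P → fWord σ' δ' k i r ∈ P := by
  intro k
  induction k with
  | zero =>
    intro i r hr
    match i with
    | 0 => exact hr
    | i + 1 => exact h0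
  | succ k ih =>
    intro i r hr
    match i with
    | 0 => exact ih 0 (δ' r) (hδ r hr)
    | i + 1 =>
      exact hadd _ (ih i (σ' r) (hσ r hr)) _ (ih (i + 1) (δ' r) (hδ r hr))

/-- The annihilator of a coprime quotient is a prime ideal. -/
lemma coprime_ann_prime (T : Type*) [Ring T] (L : Type*) [AddCommGroup L] [Module Tᵐᵒᵖ L]
    (N : Submodule Tᵐᵒᵖ L) (hco : CoprimeQuot T L N) :
    IsPrimeIdealSet T (annIn T L (N : Set L)) := by
  obtain ⟨⟨l0, hl0⟩, hann⟩ := hco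
  refine ⟨?_, ?_, ?_, ?_, ?_⟩
  · intro l
    simp only [op_zero, zero_smul]
    exact N.zero_mem
  · intro a ha b hb l
    have h : op (a + b) • l = op a • l + op b • l := by rw [op_add, add_smul]
    rw [h]
    exact N.add_mem (ha l) (hb l)
  · intro a ha t
    constructor
    · intro l
      have h : op (t * a) • l = op a • (op t • l) := by rw [op_mul, mul_smul]
      rw [h]
      exact ha _
    · intro l
      have h : op (a * t) • l = op t • (op a • l) := by rw [op_mul, mul_smul]
      rw [h]
      exact N.smul_mem _ (ha l)
  · intro h
    have h1 : (1 : T) ∈ annIn T L (N : Set L) := h ▸ Set.mem_univ 1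
    have h2 := h1 l0
    rw [op_one, one_smul] at h2
    exact hl0 h2
  · intro a b hab
    by_cases hb : b ∈ annIn T L (N : Set L)
    · right; exact hb
    · left
      simp only [annIn, Set.mem_setOf_eq, not_forall] at hb
      obtain ⟨l1, hl1⟩ := hb
      let N' : Submodule Tᵐᵒᵖ L :=
        { carrier := {l | ∀ t : T, op (t * b) • l ∈ N}
          add_mem' := by
            intro u v hu hv t
            rw [smul_add]
            exact N.add_mem (hu t) (hv t)
          zero_mem' := by
            intro t
            rw [smul_zero]
            exact N.zero_mem
          smul_mem' := by
            intro s l hl t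
            have h : op (t * b) • (s • l) = op ((unop s * t) * b) • l := by
              rw [← mul_smul]
              congr 1
              calc op (t * b) * s = op (t * b) * op (unop s) := by rw [op_unop]
                _ = op (unop s * (t * b)) := (op_mul _ _).symm
                _ = op ((unop s * t) * b) := by rw [mul_assoc]
            rw [h]
            exact hl _ }
      have hle : N ≤ N' := fun n hn t => N.smul_mem _ hn
      have hne : N' ≠ ⊤ := by
        intro h
        have h2 : l1 ∈ N' := h ▸ Submodule.mem_top
        have h3 := h2 1
        rw [one_mul] at h3
        exact hl1 h3
      have heq := hann N' hle hne
      have ha' : a ∈ annIn T L (N' : Set L) := by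
        intro l t
        have h : op (t * b) • (op a • l) = op (a * t * b) • l := by
          rw [← mul_smul, ← op_mul, mul_assoc]
        rw [h]
        exact hab t l
      rw [← heq] at ha'
      exact ha'

end Aux

theorem attached_primes_inverse_polynomial_superset
    {R : Type*} [Ring R] (σ : R ≃+* R) (δ : R → R)
    (hδadd : ∀ r s : R, δ (r + s) = δ r + δ s)
    (hδmul : ∀ r s : R, δ (r * s) = σ r * δ s + δ r * s)
    (hδln : ∀ r : R, ∃ n : ℕ, 0 < n ∧ δ^[n] r = 0)
    {A : Type*} [Ring A] (ι : R →+* A) (x : A)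
    (hbasis : Function.Bijective fun c : ℕ →₀ R => c.sum fun k r => ι r * x ^ k)
    (hcomm : ∀ r : R, x * ι r = ι (σ r) * x + x * ι (δ r) * x)
    {M : Type*} [AddCommGroup M] [Module Rᵐᵒᵖ M]
    [Module Aᵐᵒᵖ (ℕ →₀ M)]
    (hactr : ∀ (m : M) (k : ℕ) (r : R),
      op (ι r) • Finsupp.single k m =
        ∑ i ∈ Finset.range (k + 1),
          Finsupp.single i (op (fWord (⇑σ.symm) (fun s => -δ (σ.symm s)) k i r) • m))
    (hactx : ∀ (m : M) (k j : ℕ),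
      op (x ^ j) • Finsupp.single k m =
        if j ≤ k then Finsupp.single (k - j) m else (0 : ℕ →₀ M))
    (hcompat : CompletelySigmaDeltaCompatible R (⇑σ) δ M) :
    ∀ P ∈ AttSet R M, paSet ι P ∈ AttSet A (ℕ →₀ M) := by
  intro P hP
  obtain ⟨-, N, hcoN, hPeq⟩ := hP
  obtain ⟨⟨m₀, hm₀⟩, hcop⟩ := hcoN
  -- membership characterizations of P
  have hPmem : ∀ r : R, r ∈ P ↔ ∀ m : M, op r • m ∈ N := by
    intro r
    rw [hPeq]
    exact Iff.rfl
  have hQ : ∀ r : R, r ∈ P ↔ ∀ m : M, op r • (Submodule.Quotient.mk m : M ⧸ N) = 0 := by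
    intro r
    rw [hPmem]
    refine forall_congr' fun m => ?_
    rw [← Submodule.Quotient.mk_smul, Submodule.Quotient.mk_eq_zero]
  have hP0 : (0 : R) ∈ P := by
    rw [hPmem]
    intro m
    rw [op_zero, zero_smul]
    exact N.zero_mem
  have hPadd : ∀ a ∈ P, ∀ b ∈ P, a + b ∈ P := by
    intro a ha b hb
    rw [hPmem] at *
    intro m
    rw [op_add, add_smul]
    exact N.add_mem (ha m) (hb m)
  have hPσ : ∀ r ∈ P, σ r ∈ P := by
    intro r hr
    rw [hQ] at *
    intro m
    exact (hcompat N _ r).1.mp (hr m)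
  have hPσ' : ∀ r ∈ P, σ.symm r ∈ P := by
    intro r hr
    rw [hQ] at *
    intro m
    refine (hcompat N _ (σ.symm r)).1.mpr ?_
    rw [σ.apply_symm_apply]
    exact hr m
  have hPδ' : ∀ r ∈ P, -δ (σ.symm r) ∈ P := by
    intro r hr
    have h1 := hPσ' r hr
    rw [hQ] at *
    intro m
    have h2 : op (δ (σ.symm r)) • (Submodule.Quotient.mk m : M ⧸ N) = 0 :=
      (hcompat N _ (σ.symm r)).2 (h1 m)
    rw [op_neg, neg_smul, h2, neg_zero]
  have hPw : ∀ (k i : ℕ) (r : R), r ∈ P →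
      fWord (⇑σ.symm) (fun s => -δ (σ.symm s)) k i r ∈ P :=
    fWord_mem _ _ P hP0 hPadd hPσ' hPδ'
  have hPiter : ∀ (k : ℕ) (r : R), (⇑σ.symm)^[k] r ∈ P → r ∈ P := by
    intro k
    induction k with
    | zero => intro r hr; exact hr
    | succ k ih =>
      intro r hr
      rw [Function.iterate_succ_apply] at hr
      have h1 := hPσ _ (ih _ hr)
      rwa [σ.apply_symm_apply] at h1
  have hleft : Function.LeftInverse ⇑σ.symm ⇑σ := σ.symm_apply_apply
  -- basic computations
  have hact1 : ∀ (r : R) (k K : ℕ) (m : M),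
      op (ι r * x ^ k) • Finsupp.single K m =
        ∑ i ∈ Finset.range (K + 1),
          (if k ≤ i then
            Finsupp.single (i - k)
              (op (fWord (⇑σ.symm) (fun s => -δ (σ.symm s)) K i r) • m)
          else (0 : ℕ →₀ M)) := by
    intro r k K m
    rw [op_mul, mul_smul, hactr, Finset.smul_sum]
    exact Finset.sum_congr rfl fun i _ => hactx _ i k
  have hrep : ∀ a : A, ∃ c : ℕ →₀ R, a = c.sum fun k r => ι r * x ^ k := by
    intro a
    obtain ⟨c, hc⟩ := hbasis.2 a
    exact ⟨c, hc.symm⟩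
  have hopsum : ∀ (c : ℕ →₀ R) (v : ℕ →₀ M),
      op (c.sum fun k r => ι r * x ^ k) • v =
        ∑ k ∈ c.support, op (ι (c k) * x ^ k) • v := by
    intro c v
    have h : (c.sum fun k r => ι r * x ^ k) = ∑ k ∈ c.support, ι (c k) * x ^ k := rfl
    rw [h, Finset.op_sum, Finset.sum_smul]
  have hvss : ∀ v : ℕ →₀ M, v = ∑ j ∈ v.support, Finsupp.single j (v j) := fun v =>
    (Finsupp.sum_single v).symm
  have hsingle_mem : ∀ (k : ℕ) (n : M), n ∈ N → ∀ i, (Finsupp.single k n) i ∈ N := by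
    intro k n hn i
    rw [Finsupp.single_apply]
    split_ifs
    · exact hn
    · exact N.zero_mem
  have hQsum : ∀ (s : Finset ℕ) (f : ℕ → (ℕ →₀ M)),
      (∀ b ∈ s, ∀ i, (f b) i ∈ N) → ∀ i, (∑ b ∈ s, f b) i ∈ N := by
    intro s f hf i
    rw [Finsupp.finset_sum_apply]
    exact Submodule.sum_mem N fun b hb => hf b hb i
  have hcoord : ∀ (r : R) (k K : ℕ) (m : M),
      (∀ i, op (fWord (⇑σ.symm) (fun s => -δ (σ.symm s)) K i r) • m ∈ N) →
      ∀ j, (op (ι r * x ^ k) • Finsupp.single K m) j ∈ N := by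
    intro r k K m h j
    rw [hact1]
    refine hQsum _ _ ?_ j
    intro i hi j'
    split_ifs
    · exact hsingle_mem _ _ (h i) j'
    · rw [Finsupp.zero_apply]
      exact N.zero_mem
  -- the submodule N[x⁻¹] of M[x⁻¹]
  let SN : Submodule Aᵐᵒᵖ (ℕ →₀ M) :=
    { carrier := {v | ∀ i, v i ∈ N}
      add_mem' := by
        intro u v hu hv i
        rw [Finsupp.add_apply]
        exact N.add_mem (hu i) (hv i)
      zero_mem' := by
        intro i
        rw [Finsupp.zero_apply]
        exact N.zero_mem
      smul_mem' := by
        intro s v hv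
        simp only [Set.mem_setOf_eq] at hv ⊢
        intro i
        obtain ⟨c, hc⟩ := hrep (unop s)
        have hs : s = op (c.sum fun k r => ι r * x ^ k) := by rw [← hc, op_unop]
        rw [hs, hopsum]
        refine hQsum _ _ ?_ i
        intro k hk i'
        rw [show (op (ι (c k) * x ^ k) • v) = ∑ j ∈ v.support,
          op (ι (c k) * x ^ k) • Finsupp.single j (v j) by
            conv_lhs => rw [hvss v]
            rw [Finset.smul_sum]]
        refine hQsum _ _ ?_ i'
        intro j hj i''
        exact hcoord _ k j (v j) (fun i3 => N.smul_mem _ (hv j)) i'' }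
  have hSNmem : ∀ v : ℕ →₀ M, v ∈ SN ↔ ∀ i, v i ∈ N := fun v => Iff.rfl
  have hsingleSN : ∀ (k : ℕ) (n : M), n ∈ N → Finsupp.single k n ∈ SN := by
    intro k n hn
    rw [hSNmem]
    exact hsingle_mem k n hn
  -- PA annihilates every quotient above SN
  have hcoordP : ∀ p ∈ P, ∀ v : ℕ →₀ M, op (ι p) • v ∈ SN := by
    intro p hp v
    rw [hSNmem]
    intro i
    rw [show (op (ι p) • v) = ∑ j ∈ v.support, op (ι p) • Finsupp.single j (v j) by
      conv_lhs => rw [hvss v]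
      rw [Finset.smul_sum]]
    refine hQsum _ _ ?_ i
    intro j hj i'
    rw [hactr]
    refine hQsum _ _ ?_ i'
    intro b hb i''
    exact hsingle_mem _ _ ((hPmem _).1 (hPw j b p hp) (v j)) i''
  have hpa_sub : ∀ S' : Submodule Aᵐᵒᵖ (ℕ →₀ M), SN ≤ S' →
      paSet ι P ⊆ annIn A (ℕ →₀ M) (S' : Set (ℕ →₀ M)) := by
    intro S' hle a ha
    obtain ⟨n, p, cc, hp, haeq⟩ := ha
    intro v
    show op a • v ∈ S'
    rw [haeq, Finset.op_sum, Finset.sum_smul]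
    refine Submodule.sum_mem _ fun i _ => ?_
    rw [op_mul, mul_smul]
    exact S'.smul_mem _ (hle (hcoordP (p i) (hp i) v))
  -- the key inclusion: annihilators of proper quotients above SN are contained in PA
  have hannsub : ∀ S' : Submodule Aᵐᵒᵖ (ℕ →₀ M), SN ≤ S' → S' ≠ ⊤ →
      annIn A (ℕ →₀ M) (S' : Set (ℕ →₀ M)) ⊆ paSet ι P := by
    intro S' hle htop a ha
    classical
    simp only [annIn, Set.mem_setOf_eq] at ha
    have hex : ∃ K : ℕ, ∃ m : M, Finsupp.single K m ∉ S' := by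
      by_contra h
      push_neg at h
      apply htop
      rw [Submodule.eq_top_iff']
      intro v
      rw [hvss v]
      exact Submodule.sum_mem _ fun j _ => h j (v j)
    obtain ⟨mK, hmK⟩ := Nat.find_spec hex
    set K := Nat.find hex with hKdef
    have hKlow : ∀ k < K, ∀ m : M, Finsupp.single k m ∈ S' := by
      intro k hk m
      by_contra hc
      exact Nat.find_min hex hk ⟨m, hc⟩
    have hNKsmul : ∀ (r : R) (m : M), Finsupp.single K m ∈ S' →
        Finsupp.single K (op r • m) ∈ S' := by
      intro r m hm
      have h1 : op (ι ((⇑σ)^[K] r) * x ^ 0) • Finsupp.single K m ∈ S' :=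
        S'.smul_mem _ hm
      rw [hact1] at h1
      simp only [Nat.zero_le, if_true, Nat.sub_zero] at h1
      rw [Finset.sum_range_succ, fWord_diag, hleft.iterate K r] at h1
      have hpre : (∑ i ∈ Finset.range K,
          Finsupp.single i
            (op (fWord (⇑σ.symm) (fun s => -δ (σ.symm s)) K i ((⇑σ)^[K] r)) • m)) ∈ S' :=
        Submodule.sum_mem _ fun i hi => hKlow i (Finset.mem_range.mp hi) _
      have h2 := S'.sub_mem h1 hpre
      rwa [add_sub_cancel_left] at h2
    let NK : Submodule Rᵐᵒᵖ M :=
      { carrier := {m | Finsupp.single K m ∈ S'}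
        add_mem' := by
          intro u v hu hv
          show Finsupp.single K (u + v) ∈ S'
          rw [Finsupp.single_add]
          exact S'.add_mem hu hv
        zero_mem' := by
          show Finsupp.single K (0 : M) ∈ S'
          rw [Finsupp.single_zero]
          exact S'.zero_mem
        smul_mem' := by
          intro r m hm
          show Finsupp.single K (r • m) ∈ S'
          have h := hNKsmul (unop r) m hm
          rwa [op_unop] at h }
    have hNKmem : ∀ m : M, m ∈ NK ↔ Finsupp.single K m ∈ S' := fun m => Iff.rfl
    have hNleNK : N ≤ NK := by
      intro n hn
      rw [hNKmem]
      exact hle (hsingleSN K n hn)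
    have hNKtop : NK ≠ ⊤ := by
      intro h
      exact hmK ((hNKmem mK).mp (h ▸ Submodule.mem_top))
    have hPK : P = annIn R M (NK : Set M) := by
      rw [hPeq, hcop NK hNleNK hNKtop]
    obtain ⟨c, hc⟩ := hrep a
    have hckP : ∀ j : ℕ, c j ∈ P := by
      intro j
      induction j using Nat.strong_induction_on with
      | _ j IH =>
        by_cases hj : j ∈ c.support
        · suffices hs : (⇑σ.symm)^[K + j] (c j) ∈ P by exact hPiter _ _ hs
          rw [hPK]
          intro m
          show Finsupp.single K (op ((⇑σ.symm)^[K + j] (c j)) • m) ∈ S'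
          have hin : op a • Finsupp.single (K + j) m ∈ S' := ha _
          rw [hc, hopsum, ← Finset.sum_erase_add _ _ hj] at hin
          have herase : (∑ k ∈ c.support.erase j,
              op (ι (c k) * x ^ k) • Finsupp.single (K + j) m) ∈ S' := by
            refine Submodule.sum_mem _ fun k hk => ?_
            have hkj : k ≠ j := Finset.ne_of_mem_erase hk
            rw [hact1]
            refine Submodule.sum_mem _ fun i hi => ?_
            rcases lt_or_gt_of_ne hkj with hlt | hgt
            · split_ifs with h
              · refine hle (hsingleSN _ _ ?_)
                exact (hPmem _).1 (hPw _ _ _ (IH k hlt)) m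
              · exact S'.zero_mem
            · split_ifs with h
              · refine hKlow _ ?_ _
                have hi' : i ≤ K + j := Nat.lt_succ_iff.mp (Finset.mem_range.mp hi)
                omega
              · exact S'.zero_mem
          have hjterm : op (ι (c j) * x ^ j) • Finsupp.single (K + j) m ∈ S' := by
            have h2 := S'.sub_mem hin herase
            rwa [add_sub_cancel_left] at h2
          rw [hact1, Finset.sum_range_succ] at hjterm
          have hlowpart : (∑ i ∈ Finset.range (K + j),
              if j ≤ i then
                Finsupp.single (i - j)
                  (op (fWord (⇑σ.symm) (fun s => -δ (σ.symm s)) (K + j) i (c j)) • m)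
              else (0 : ℕ →₀ M)) ∈ S' := by
            refine Submodule.sum_mem _ fun i hi => ?_
            split_ifs with h
            · refine hKlow _ ?_ _
              have hi' : i < K + j := Finset.mem_range.mp hi
              omega
            · exact S'.zero_mem
          have hfin := S'.sub_mem hjterm hlowpart
          rw [add_sub_cancel_left] at hfin
          rw [if_pos (Nat.le_add_left j K), Nat.add_sub_cancel, fWord_diag] at hfin
          exact hfin
        · rw [Finsupp.notMem_support_iff.mp hj]
          exact hP0
    -- conclude a ∈ paSet ι P
    refine ⟨c.support.card, fun i => c ((c.support.equivFin.symm i : {y // y ∈ c.support}) : ℕ),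
      fun i => x ^ ((c.support.equivFin.symm i : {y // y ∈ c.support}) : ℕ),
      fun i => hckP _, ?_⟩
    rw [hc]
    have h1 : (c.sum fun k r => ι r * x ^ k) = ∑ k ∈ c.support, ι (c k) * x ^ k := rfl
    rw [h1, ← Finset.sum_coe_sort c.support (fun k => ι (c k) * x ^ k),
      ← Equiv.sum_comp c.support.equivFin.symm
        (fun k : {y // y ∈ c.support} => ι (c (k : ℕ)) * x ^ (k : ℕ))]
  -- SN is a proper submodule
  have hSNtop : SN ≠ ⊤ := by
    intro h
    have h1 : Finsupp.single 0 m₀ ∈ SN := h ▸ Submodule.mem_top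
    have h2 := (hSNmem _).mp h1 0
    rw [Finsupp.single_eq_same] at h2
    exact hm₀ h2
  have hmain : paSet ι P = annIn A (ℕ →₀ M) (SN : Set (ℕ →₀ M)) :=
    Set.Subset.antisymm (hpa_sub SN le_rfl) (hannsub SN le_rfl hSNtop)
  have hcoSN : CoprimeQuot A (ℕ →₀ M) SN := by
    refine ⟨⟨Finsupp.single 0 m₀, fun h => hm₀ ?_⟩, ?_⟩
    · have h2 := (hSNmem _).mp h 0
      rwa [Finsupp.single_eq_same] at h2
    · intro S' hle hne
      rw [← hmain]
      exact Set.Subset.antisymm (hpa_sub S' hle) (hannsub S' hle hne)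
  refine ⟨?_, SN, hcoSN, hmain⟩
  rw [hmain]
  exact coprime_ann_prime A (ℕ →₀ M) SN hcoSN
end
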